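/- Let X, X_1, X_2, ... be i.i.d. with X ∈ DAN (domain of attraction of the normal law) and EX = 0. Then max_{1≤i≤n} |X_i| / V_n → 0 in probability as n → ∞, where V_n^2 = Σ_{i=1}^n X_i^2. -/

import Mathlib

open MeasureTheory Filter Finset ProbabilityTheory Real Topology

/-!
Let `ℓ(x) = E[X² 1_{|X| ≤ x}]`. Slow variation gives `ℓ(2x) ≤ (1 + δ) ℓ(x)` for large `x`; since the
dyadic shell `{2ᵏx < |X| ≤ 2ᵏ⁺¹x}` contributes at least `(2ᵏx)²` times its probability to
`ℓ(2ᵏ⁺¹x) - ℓ(2ᵏx)`, summing over shells yields the tail bound `x² P(|X| > x) ≤ θ ℓ(x)` for any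
`θ > 0` and large `x`.

For large `n` pick a dyadic level `b = 2ᵏM` with `n ℓ(b) / b² ∈ [λ, 4λ)`: the ratio is at least `λ`
at `k = 0`, tends to `0` as `k → ∞`, and drops by at most a factor `4` per step. A Chernoff bound for the truncated squares
`min(Xᵢ², b²)` gives `P(Vₙ ≤ b) ≤ exp(1 - λ/2)`, and the union bound with the tail estimate gives
`P(maxᵢ |Xᵢ| > εb) ≤ n P(|X| > εb) ≤ 2θ n ℓ(b) / (εb)² < 8θλ / ε²`. Off these two events
`maxᵢ |Xᵢ| ≤ εb < εVₙ`.
-/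

lemma eventually_ne_zero_of_tendsto_div_one {α : Type*} {l : Filter α} {f g : α → ℝ}
    (h : Tendsto (fun x => f x / g x) l (𝓝 1)) : ∀ᶠ x in l, g x ≠ 0 := by
  filter_upwards [h.eventually_ne one_ne_zero] with x hx hg
  simp [hg] at hx

lemma eventually_le_mul_of_tendsto_div_one {α : Type*} {l : Filter α} {f g : α → ℝ}
    (h : Tendsto (fun x => f x / g x) l (𝓝 1)) (hg : ∀ x, 0 ≤ g x) {a : ℝ} (ha : 1 < a) :
    ∀ᶠ x in l, f x ≤ a * g x := by
  filter_upwards [h.eventually (eventually_le_nhds ha), eventually_ne_zero_of_tendsto_div_one h]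
    with x hx hx0
  rwa [div_le_iff₀ ((hg x).lt_of_ne' hx0)] at hx

lemma apply_two_pow_mul_le {ℓ : ℝ → ℝ} {M : ℝ} (hM : 0 ≤ M)
    (hdouble : ∀ x ≥ M, ℓ (2 * x) ≤ 2 * ℓ x) (k : ℕ) : ℓ (2 ^ k * M) ≤ 2 ^ k * ℓ M := by
  induction k with
  | zero => simp
  | succ k ih =>
    calc ℓ (2 ^ (k + 1) * M) = ℓ (2 * (2 ^ k * M)) := by ring_nf
    _ ≤ 2 * ℓ (2 ^ k * M) := hdouble _ (le_mul_of_one_le_left hM (one_le_pow₀ one_le_two))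
    _ ≤ 2 ^ (k + 1) * ℓ M := by rw [pow_succ']; linarith

lemma exists_le_and_lt_mul_of_le_mul_succ {g : ℕ → ℝ} {a c : ℝ} (hc : 0 < c) (h0 : a ≤ g 0)
    (hstep : ∀ k, g k ≤ c * g (k + 1)) (hlt : ∃ k, g k < a) : ∃ k, a ≤ g k ∧ g k < c * a := by
  by_contra! h
  have hge : ∀ k, a ≤ g k := by
    intro k
    induction k with
    | zero => exact h0
    | succ k ih => exact le_of_mul_le_mul_left ((h k ih).trans (hstep k)) hc
  obtain ⟨k, hk⟩ := hlt
  exact (hge k).not_gt hk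

lemma eventually_exists_le_div_sq_lt {ℓ : ℝ → ℝ} (hmono : Monotone ℓ) {M : ℝ} (hM : 0 < M)
    (hℓM : 0 < ℓ M) (hdouble : ∀ x ≥ M, ℓ (2 * x) ≤ 2 * ℓ x) {a : ℝ} (ha : 0 < a) :
    ∀ᶠ n : ℕ in atTop, ∃ b ≥ M, a ≤ n * ℓ b / b ^ 2 ∧ n * ℓ b / b ^ 2 < 4 * a := by
  filter_upwards [tendsto_natCast_atTop_atTop.eventually_ge_atTop (a * M ^ 2 / ℓ M)] with n hn
  set g : ℕ → ℝ := fun k => n * ℓ (2 ^ k * M) / (2 ^ k * M) ^ 2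
  have h0 : a ≤ g 0 := by
    simpa [g, le_div_iff₀ (pow_pos hM 2), div_le_iff₀ hℓM] using hn
  have hstep : ∀ k, g k ≤ 4 * g (k + 1) := by
    intro k
    have hℓ_le : ℓ (2 ^ k * M) ≤ ℓ (2 ^ (k + 1) * M) :=
      hmono (by gcongr; exacts [one_le_two, k.le_succ])
    rw [show 4 * g (k + 1) = n * ℓ (2 ^ (k + 1) * M) / (2 ^ k * M) ^ 2 by
      simp only [g]; rw [pow_succ]; field_simp; ring]
    exact div_le_div_of_nonneg_right (by gcongr) (by positivity)
  have hlt : ∃ k, g k < a := by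
    have hbound : ∀ k, g k ≤ n * ℓ M / M ^ 2 * (1 / 2) ^ k := by
      intro k
      rw [show n * ℓ M / M ^ 2 * (1 / 2 : ℝ) ^ k = n * (2 ^ k * ℓ M) / (2 ^ k * M) ^ 2 by
        rw [one_div_pow]; field_simp]
      exact div_le_div_of_nonneg_right
        (by gcongr; exact apply_two_pow_mul_le hM.le hdouble k) (by positivity)
    have hlim : Tendsto (fun k : ℕ => n * ℓ M / M ^ 2 * (1 / 2 : ℝ) ^ k) atTop (𝓝 0) := by
      simpa using (tendsto_pow_atTop_nhds_zero_of_lt_one (by norm_num : (0:ℝ) ≤ 1 / 2)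
        (by norm_num)).const_mul (n * ℓ M / M ^ 2)
    obtain ⟨k, hk⟩ := (hlim.eventually (gt_mem_nhds ha)).exists
    exact ⟨k, (hbound k).trans_lt hk⟩
  obtain ⟨k, hk⟩ := exists_le_and_lt_mul_of_le_mul_succ four_pos h0 hstep hlt
  exact ⟨2 ^ k * M, le_mul_of_one_le_left hM.le (one_le_pow₀ one_le_two), hk⟩

section TruncatedSecondMoment

variable {Ω : Type*} [MeasurableSpace Ω] {μ : Measure Ω} {W : Ω → ℝ}

noncomputable def truncatedSecondMoment (μ : Measure Ω) (W : Ω → ℝ) (x : ℝ) : ℝ :=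
  ∫ ω in {ω | |W ω| ≤ x}, W ω ^ 2 ∂μ

lemma measurableSet_abs_le (hW : Measurable W) (x : ℝ) : MeasurableSet {ω | |W ω| ≤ x} :=
  measurableSet_le hW.abs measurable_const

lemma integrableOn_sq_abs_le [IsFiniteMeasure μ] (hW : Measurable W) (x : ℝ) :
    IntegrableOn (fun ω => W ω ^ 2) {ω | |W ω| ≤ x} μ := by
  refine Integrable.of_bound (hW.pow_const 2).aestronglyMeasurable (x ^ 2) ?_
  filter_upwards [ae_restrict_mem (measurableSet_abs_le hW x)] with ω hω
  rw [Real.norm_eq_abs, abs_pow]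
  exact pow_le_pow_left₀ (abs_nonneg _) hω 2

lemma truncatedSecondMoment_nonneg (x : ℝ) : 0 ≤ truncatedSecondMoment μ W x :=
  setIntegral_nonneg_of_ae_restrict (.of_forall fun ω => sq_nonneg (W ω))

lemma truncatedSecondMoment_mono [IsFiniteMeasure μ] (hW : Measurable W) :
    Monotone (truncatedSecondMoment μ W) := fun _ y hxy =>
  setIntegral_mono_set (integrableOn_sq_abs_le hW y) (.of_forall fun ω => sq_nonneg (W ω))
    (.of_forall fun _ hω => le_trans hω hxy)

lemma sq_mul_measureReal_le_sub [IsFiniteMeasure μ] (hW : Measurable W) {a c : ℝ}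
    (ha : 0 ≤ a) (hac : a ≤ c) :
    a ^ 2 * μ.real {ω | a < |W ω| ∧ |W ω| ≤ c} ≤
      truncatedSecondMoment μ W c - truncatedSecondMoment μ W a := by
  have hset : {ω | a < |W ω| ∧ |W ω| ≤ c} = {ω | |W ω| ≤ c} \ {ω | |W ω| ≤ a} := by
    ext ω; simp [and_comm]
  rw [truncatedSecondMoment, truncatedSecondMoment,
    ← setIntegral_sdiff (measurableSet_abs_le hW a) (integrableOn_sq_abs_le hW c)
      (fun ω (hω : |W ω| ≤ a) => hω.trans hac), ← hset]
  refine setIntegral_ge_of_const_le_real ?_ (measure_ne_top μ _)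
    (fun ω hω => ?_) ((integrableOn_sq_abs_le hW c).mono_set fun ω hω => hω.2)
  · exact (measurableSet_lt measurable_const hW.abs).inter (measurableSet_abs_le hW c)
  · rw [← sq_abs (W ω)]
    exact pow_le_pow_left₀ ha hω.1.le 2

lemma truncatedSecondMoment_le_integral_min_sq [IsFiniteMeasure μ] (hW : Measurable W) (b : ℝ) :
    truncatedSecondMoment μ W b ≤ ∫ ω, min (W ω ^ 2) (b ^ 2) ∂μ := by
  have hint : Integrable (fun ω => min (W ω ^ 2) (b ^ 2)) μ := by
    refine Integrable.of_bound ((hW.pow_const 2).min measurable_const).aestronglyMeasurable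
      (b ^ 2) (.of_forall fun ω => ?_)
    rw [Real.norm_eq_abs, abs_of_nonneg (le_min (sq_nonneg _) (sq_nonneg _))]
    exact min_le_right _ _
  calc truncatedSecondMoment μ W b = ∫ ω in {ω | |W ω| ≤ b}, min (W ω ^ 2) (b ^ 2) ∂μ := by
        refine setIntegral_congr_fun (measurableSet_abs_le hW b) fun ω hω => ?_
        exact (min_eq_left (sq_le_sq' (abs_le.mp hω).1 (abs_le.mp hω).2)).symm
  _ ≤ ∫ ω, min (W ω ^ 2) (b ^ 2) ∂μ :=
        setIntegral_le_integral hint (.of_forall fun ω => le_min (sq_nonneg _) (sq_nonneg _))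

lemma tendsto_measureReal_lt_abs_atTop [IsFiniteMeasure μ] (hW : Measurable W) :
    Tendsto (fun x => μ.real {ω | x < |W ω|}) atTop (𝓝 0) := by
  have hanti : Antitone fun x : ℝ => {ω | x < |W ω|} := fun x y hxy ω hω => hxy.trans_lt hω
  have hempty : ⋂ x : ℝ, {ω | x < |W ω|} = ∅ :=
    Set.eq_empty_of_forall_notMem fun ω hω => lt_irrefl |W ω| (Set.mem_iInter.mp hω |W ω|)
  have h := tendsto_measure_iInter_atTop
    (fun x => (measurableSet_lt measurable_const hW.abs).nullMeasurableSet) hanti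
    ⟨0, measure_ne_top μ _⟩
  rw [hempty, measure_empty] at h
  exact (ENNReal.tendsto_toReal ENNReal.zero_ne_top).comp h

lemma sq_mul_measureReal_lt_abs_le [IsFiniteMeasure μ] (hW : Measurable W) {x : ℝ} (hx : 0 ≤ x) :
    x ^ 2 * μ.real {ω | x < |W ω|} ≤
      truncatedSecondMoment μ W (2 * x) - truncatedSecondMoment μ W x +
        x ^ 2 * μ.real {ω | 2 * x < |W ω|} := by
  have hsub : {ω | x < |W ω|} ⊆ {ω | x < |W ω| ∧ |W ω| ≤ 2 * x} ∪ {ω | 2 * x < |W ω|} :=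
    fun ω hω => (le_or_gt |W ω| (2 * x)).imp (fun h => ⟨hω, h⟩) id
  calc x ^ 2 * μ.real {ω | x < |W ω|}
      ≤ x ^ 2 * μ.real {ω | x < |W ω| ∧ |W ω| ≤ 2 * x} + x ^ 2 * μ.real {ω | 2 * x < |W ω|} := by
        rw [← mul_add]
        gcongr
        exact (measureReal_mono hsub).trans (measureReal_union_le _ _)
  _ ≤ _ := by gcongr; exact sq_mul_measureReal_le_sub hW hx (by linarith)

lemma sq_mul_measureReal_lt_abs_le_of_doubling [IsFiniteMeasure μ] (hW : Measurable W)
    {M δ : ℝ} (hM : 0 ≤ M) (hδ₀ : 0 ≤ δ) (hδ₁ : δ ≤ 1)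
    (hdouble : ∀ x ≥ M, truncatedSecondMoment μ W (2 * x) ≤ (1 + δ) * truncatedSecondMoment μ W x)
    (K : ℕ) {x : ℝ} (hx : M ≤ x) :
    x ^ 2 * μ.real {ω | x < |W ω|} ≤
      2 * δ * truncatedSecondMoment μ W x + x ^ 2 * μ.real {ω | 2 ^ K * x < |W ω|} := by
  induction K generalizing x with
  | zero =>
    simpa using mul_nonneg (mul_nonneg zero_le_two hδ₀) (truncatedSecondMoment_nonneg x)
  | succ K ih =>
    have hx₀ : 0 ≤ x := hM.trans hx
    have hstep := sq_mul_measureReal_lt_abs_le (μ := μ) hW hx₀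
    have hnext := ih (x := 2 * x) (by linarith)
    rw [← mul_assoc, ← pow_succ] at hnext
    have hℓ := hdouble x hx
    have hℓ₀ := truncatedSecondMoment_nonneg (μ := μ) (W := W) x
    nlinarith [mul_le_mul_of_nonneg_left hℓ hδ₀, mul_nonneg (mul_nonneg hδ₀ (sub_nonneg.2 hδ₁)) hℓ₀]

lemma eventually_sq_mul_measureReal_lt_abs_le [IsFiniteMeasure μ] (hW : Measurable W)
    (hslow : Tendsto (fun x => truncatedSecondMoment μ W (2 * x) / truncatedSecondMoment μ W x)
      atTop (𝓝 1))
    {θ : ℝ} (hθ : 0 < θ) :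
    ∀ᶠ x in atTop, x ^ 2 * μ.real {ω | x < |W ω|} ≤ θ * truncatedSecondMoment μ W x := by
  set δ := min (θ / 2) 1
  have hδ₀ : 0 ≤ δ := le_min (by positivity) zero_le_one
  obtain ⟨M, hM⟩ := eventually_atTop.1 <| eventually_le_mul_of_tendsto_div_one hslow
    truncatedSecondMoment_nonneg (lt_add_of_pos_right 1 (lt_min (half_pos hθ) one_pos))
  filter_upwards [eventually_ge_atTop (max M 0), eventually_gt_atTop 0] with x hxM hx₀
  have hbound := fun K => sq_mul_measureReal_lt_abs_le_of_doubling hW (le_max_right M 0) hδ₀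
    (min_le_right _ _) (fun y hy => hM y ((le_max_left M 0).trans hy)) K hxM
  have hlim : Tendsto (fun K : ℕ => 2 * δ * truncatedSecondMoment μ W x +
      x ^ 2 * μ.real {ω | 2 ^ K * x < |W ω|}) atTop (𝓝 (2 * δ * truncatedSecondMoment μ W x)) := by
    simpa using tendsto_const_nhds.add (((tendsto_measureReal_lt_abs_atTop hW).comp
      ((tendsto_pow_atTop_atTop_of_one_lt one_lt_two).atTop_mul_const hx₀)).const_mul (x ^ 2))
  refine (ge_of_tendsto' hlim hbound).trans ?_
  gcongr
  · exact truncatedSecondMoment_nonneg x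
  · linarith [min_le_left (θ / 2) 1]

lemma eventually_sq_mul_measureReal_lt_abs_mul_le [IsFiniteMeasure μ] (hW : Measurable W)
    (hslow₂ : Tendsto (fun x => truncatedSecondMoment μ W (2 * x) / truncatedSecondMoment μ W x)
      atTop (𝓝 1))
    {ε : ℝ} (hε : 0 < ε)
    (hslowε : Tendsto (fun x => truncatedSecondMoment μ W (ε * x) / truncatedSecondMoment μ W x)
      atTop (𝓝 1))
    {θ : ℝ} (hθ : 0 < θ) :
    ∀ᶠ x in atTop, (ε * x) ^ 2 * μ.real {ω | ε * x < |W ω|} ≤ θ * truncatedSecondMoment μ W x := by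
  filter_upwards [(tendsto_id.const_mul_atTop hε).eventually
      (eventually_sq_mul_measureReal_lt_abs_le hW hslow₂ (half_pos hθ)),
    eventually_le_mul_of_tendsto_div_one hslowε truncatedSecondMoment_nonneg one_lt_two]
    with x htail hℓ
  calc (ε * x) ^ 2 * μ.real {ω | ε * x < |W ω|} ≤ θ / 2 * truncatedSecondMoment μ W (ε * x) :=
        htail
  _ ≤ θ / 2 * (2 * truncatedSecondMoment μ W x) := by gcongr
  _ = θ * truncatedSecondMoment μ W x := by ring

end TruncatedSecondMoment

lemma exp_neg_le_one_sub_half {u : ℝ} (h₀ : 0 ≤ u) (h₁ : u ≤ 1) : exp (-u) ≤ 1 - u / 2 := by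
  have h : exp (-u) * (1 + u) ≤ 1 :=
    calc exp (-u) * (1 + u) ≤ exp (-u) * exp u := by gcongr; linarith [add_one_le_exp u]
    _ = 1 := by rw [← exp_add, neg_add_cancel, exp_zero]
  nlinarith [exp_pos (-u)]

section Chernoff

variable {Ω : Type*} [MeasurableSpace Ω] {μ : Measure Ω} [IsProbabilityMeasure μ]

lemma mgf_neg_inv_le_exp {Y : Ω → ℝ} (hY : Measurable Y) {c : ℝ} (hc : 0 < c)
    (h₀ : ∀ ω, 0 ≤ Y ω) (h₁ : ∀ ω, Y ω ≤ c) : mgf Y μ (-c⁻¹) ≤ exp (-(μ[Y] / (2 * c))) := by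
  have hint : Integrable Y μ := Integrable.of_bound hY.aestronglyMeasurable c
    (.of_forall fun ω => by rw [Real.norm_eq_abs, abs_of_nonneg (h₀ ω)]; exact h₁ ω)
  calc mgf Y μ (-c⁻¹) ≤ ∫ ω, (1 - Y ω / c / 2) ∂μ := by
        refine integral_mono (integrable_exp_mul_of_mem_Icc hY.aemeasurable
          (.of_forall fun ω => ⟨h₀ ω, h₁ ω⟩)) ((integrable_const 1).sub
          ((hint.div_const c).div_const 2)) fun ω => ?_
        rw [neg_mul, inv_mul_eq_div]
        exact exp_neg_le_one_sub_half (div_nonneg (h₀ ω) hc.le) ((div_le_one hc).2 (h₁ ω))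
  _ = 1 - μ[Y] / (2 * c) := by
        rw [integral_sub (integrable_const 1) ((hint.div_const c).div_const 2), integral_const,
          integral_div, integral_div, div_div, mul_comm c]
        simp
  _ ≤ exp (-(μ[Y] / (2 * c))) := one_sub_le_exp_neg _

lemma measureReal_sum_le_le_exp {Y : ℕ → Ω → ℝ} (hmeas : ∀ i, Measurable (Y i))
    (hindep : iIndepFun Y μ) (hident : ∀ i, IdentDistrib (Y i) (Y 0) μ μ) {c : ℝ} (hc : 0 < c)
    (h₀ : ∀ i ω, 0 ≤ Y i ω) (h₁ : ∀ i ω, Y i ω ≤ c) (n : ℕ) :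
    μ.real {ω | ∑ i ∈ range n, Y i ω ≤ c} ≤ exp (1 - n * μ[Y 0] / (2 * c)) := by
  have hint : Integrable (fun ω => exp (-c⁻¹ * (∑ i ∈ range n, Y i) ω)) μ :=
    integrable_exp_mul_of_mem_Icc (a := 0) (b := n * c) (by fun_prop) <| .of_forall fun ω => by
      simp only [Finset.sum_apply, Set.mem_Icc]
      exact ⟨sum_nonneg fun i _ => h₀ i ω,
        (sum_le_sum fun i _ => h₁ i ω).trans_eq (by simp)⟩
  calc μ.real {ω | ∑ i ∈ range n, Y i ω ≤ c}
      ≤ exp (-(-c⁻¹) * c) * mgf (∑ i ∈ range n, Y i) μ (-c⁻¹) := by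
        simpa [Finset.sum_apply] using
          measure_le_le_exp_mul_mgf c (neg_nonpos.2 (inv_nonneg.2 hc.le)) hint
  _ = exp 1 * mgf (Y 0) μ (-c⁻¹) ^ n := by
        rw [hindep.mgf_sum hmeas,
          prod_congr rfl fun i _ => mgf_congr_of_identDistrib _ _ (hident i) _, prod_const, card_range, neg_neg, inv_mul_cancel₀ hc.ne']
  _ ≤ exp 1 * exp (-(μ[Y 0] / (2 * c))) ^ n := by
        gcongr
        exacts [mgf_nonneg, mgf_neg_inv_le_exp (hmeas 0) hc (h₀ 0) (h₁ 0)]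
  _ = exp (1 - n * μ[Y 0] / (2 * c)) := by
        rw [← exp_nat_mul, ← exp_add]; ring_nf

end Chernoff

lemma sum_sq_le_or_exists_lt_abs_of_le_abs_iSup_div {x : ℕ → ℝ} {n : ℕ} {ε b : ℝ} (hε : 0 < ε)
    (hb : 0 ≤ b) (h : ε ≤ |(⨆ i : Fin n, |x i|) / √(∑ i ∈ range n, x i ^ 2)|) :
    ∑ i ∈ range n, x i ^ 2 ≤ b ^ 2 ∨ ∃ i ∈ range n, ε * b < |x i| := by
  refine or_iff_not_imp_left.2 fun hV => ?_
  by_contra! hx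
  have hVb : b < √(∑ i ∈ range n, x i ^ 2) := (Real.lt_sqrt hb).2 (not_le.1 hV)
  have hmax : (⨆ i : Fin n, |x i|) ≤ ε * b :=
    Real.iSup_le (fun i => hx i (mem_range.2 i.2)) (by positivity)
  rw [abs_of_nonneg (div_nonneg (Real.iSup_nonneg fun i => abs_nonneg _) (sqrt_nonneg _)),
    le_div_iff₀ (hb.trans_lt hVb)] at h
  nlinarith

section SelfNormalizedMaximum

variable {Ω : Type*} [MeasurableSpace Ω] {μ : Measure Ω} [IsProbabilityMeasure μ]
  {X : ℕ → Ω → ℝ}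

lemma measureReal_le_abs_iSup_div_le (hmeas : ∀ i, Measurable (X i)) (hindep : iIndepFun X μ)
    (hident : ∀ i, IdentDistrib (X i) (X 0) μ μ) {ε b : ℝ} (hε : 0 < ε) (hb : 0 < b) (n : ℕ) :
    μ.real {ω | ε ≤ |(⨆ i : Fin n, |X i ω|) / √(∑ i ∈ range n, X i ω ^ 2)|} ≤
      exp (1 - n * truncatedSecondMoment μ (X 0) b / (2 * b ^ 2)) +
        n * μ.real {ω | ε * b < |X 0 ω|} := by
  set φ : ℝ → ℝ := fun v => min (v ^ 2) (b ^ 2)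
  have hφ : Measurable φ := (measurable_id.pow_const 2).min measurable_const
  have hchernoff : μ.real {ω | ∑ i ∈ range n, X i ω ^ 2 ≤ b ^ 2} ≤
      exp (1 - n * truncatedSecondMoment μ (X 0) b / (2 * b ^ 2)) :=
    calc μ.real {ω | ∑ i ∈ range n, X i ω ^ 2 ≤ b ^ 2}
        ≤ μ.real {ω | ∑ i ∈ range n, φ (X i ω) ≤ b ^ 2} :=
          measureReal_mono <| Set.ofPred_subset_ofPred.2 fun ω hω =>
            (sum_le_sum fun i _ => min_le_left _ _).trans hω
    _ ≤ exp (1 - n * μ[φ ∘ X 0] / (2 * b ^ 2)) :=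
          measureReal_sum_le_le_exp (Y := fun i => φ ∘ X i) (fun i => hφ.comp (hmeas i))
            (hindep.comp (fun _ => φ) fun _ => hφ) (fun i => (hident i).comp hφ) (by positivity)
            (fun _ _ => le_min (sq_nonneg _) (sq_nonneg _)) (fun _ _ => min_le_right _ _) n
    _ ≤ exp (1 - n * truncatedSecondMoment μ (X 0) b / (2 * b ^ 2)) := by
          gcongr
          exact truncatedSecondMoment_le_integral_min_sq (hmeas 0) b
  have hunion : μ.real (⋃ i ∈ range n, {ω | ε * b < |X i ω|}) ≤
      n * μ.real {ω | ε * b < |X 0 ω|} := by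
    have hsame : ∀ i, μ.real {ω | ε * b < |X i ω|} = μ.real {ω | ε * b < |X 0 ω|} := fun i =>
      congrArg ENNReal.toReal <| (hident i).measure_mem_eq (s := {v | ε * b < |v|})
        (measurableSet_lt measurable_const measurable_abs)
    refine (measureReal_biUnion_finset_le _ _).trans_eq ?_
    simp [hsame]
  calc μ.real {ω | ε ≤ |(⨆ i : Fin n, |X i ω|) / √(∑ i ∈ range n, X i ω ^ 2)|}
      ≤ μ.real ({ω | ∑ i ∈ range n, X i ω ^ 2 ≤ b ^ 2} ∪ ⋃ i ∈ range n, {ω | ε * b < |X i ω|}) :=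
        measureReal_mono fun ω (hω : ε ≤ _) => by
          simpa using sum_sq_le_or_exists_lt_abs_of_le_abs_iSup_div hε hb.le hω
  _ ≤ _ := (measureReal_union_le _ _).trans (add_le_add hchernoff hunion)

lemma eventually_measureReal_le_abs_iSup_div_le (hmeas : ∀ i, Measurable (X i))
    (hindep : iIndepFun X μ) (hident : ∀ i, IdentDistrib (X i) (X 0) μ μ)
    (hslow : ∀ c > (0 : ℝ), Tendsto (fun x => truncatedSecondMoment μ (X 0) (c * x) /
      truncatedSecondMoment μ (X 0) x) atTop (𝓝 1))
    {ε : ℝ} (hε : 0 < ε) {r : ℝ} (hr : 0 < r) :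
    ∀ᶠ n : ℕ in atTop,
      μ.real {ω | ε ≤ |(⨆ i : Fin n, |X i ω|) / √(∑ i ∈ range n, X i ω ^ 2)|} ≤ r := by
  set ℓ := truncatedSecondMoment μ (X 0)
  have hexp : Tendsto (fun a : ℝ => exp (1 - a / 2)) atTop (𝓝 0) :=
    tendsto_exp_atBot.comp <| tendsto_atBot_add_const_left _ 1 <|
      (tendsto_neg_atTop_atBot.comp (tendsto_id.atTop_div_const two_pos)).congr fun a => by simp
  obtain ⟨a, ha_exp, ha⟩ := ((hexp.eventually (eventually_le_nhds (half_pos hr))).and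
    (eventually_gt_atTop 0)).exists
  set θ := r * ε ^ 2 / (8 * a)
  have hθ : 0 < θ := by positivity
  have hnn : ∀ x, 0 ≤ ℓ x := truncatedSecondMoment_nonneg
  obtain ⟨M, hM⟩ := ((eventually_le_mul_of_tendsto_div_one (hslow 2 two_pos) hnn one_lt_two).and <|
    (eventually_sq_mul_measureReal_lt_abs_mul_le (hmeas 0) (hslow 2 two_pos) hε (hslow ε hε)
      hθ).and <|
    (eventually_ne_zero_of_tendsto_div_one (hslow 1 one_pos)).and <|
    eventually_gt_atTop 0).exists_forall_of_atTop
  have hM₀ : 0 < M := (hM M le_rfl).2.2.2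
  filter_upwards [eventually_exists_le_div_sq_lt (truncatedSecondMoment_mono (hmeas 0)) hM₀
    ((hnn M).lt_of_ne' (hM M le_rfl).2.2.1) (fun x hx => (hM x hx).1) ha]
    with n ⟨b, hbM, hab, hb4⟩
  obtain ⟨-, htail, -, hb⟩ := hM b hbM
  have hsum : exp (1 - n * ℓ b / (2 * b ^ 2)) ≤ r / 2 := by
    refine le_trans (exp_le_exp.2 ?_) ha_exp
    rw [show (n : ℝ) * ℓ b / (2 * b ^ 2) = n * ℓ b / b ^ 2 / 2 by ring]
    linarith
  have htail' : n * μ.real {ω | ε * b < |X 0 ω|} ≤ r / 2 := by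
    refine le_of_mul_le_mul_left ?_ (by positivity : 0 < (ε * b) ^ 2)
    calc (ε * b) ^ 2 * (n * μ.real {ω | ε * b < |X 0 ω|})
        = n * ((ε * b) ^ 2 * μ.real {ω | ε * b < |X 0 ω|}) := by ring
    _ ≤ n * (θ * ℓ b) := mul_le_mul_of_nonneg_left htail n.cast_nonneg
    _ = θ * b ^ 2 * (n * ℓ b / b ^ 2) := by field_simp
    _ ≤ θ * b ^ 2 * (4 * a) := by gcongr
    _ = (ε * b) ^ 2 * (r / 2) := by simp only [θ]; field_simp; ring
  calc _ ≤ exp (1 - n * ℓ b / (2 * b ^ 2)) + n * μ.real {ω | ε * b < |X 0 ω|} :=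
        measureReal_le_abs_iSup_div_le hmeas hindep hident hε hb n
  _ ≤ r := by linarith

end SelfNormalizedMaximum

theorem max_div_Vn_tendsto_zero_of_DAN_general
    {Ω : Type*} [MeasurableSpace Ω] (μ : Measure Ω) [IsProbabilityMeasure μ]
    (X : ℕ → Ω → ℝ) (hmeas : ∀ i, Measurable (X i))
    (hindep : ProbabilityTheory.iIndepFun
      (m := fun _ : ℕ => (inferInstance : MeasurableSpace ℝ)) X μ)
    (hident : ∀ i, μ.map (X i) = μ.map (X 0))
    (ℓ : ℝ → ℝ) (hℓ : ∀ x, ℓ x = ∫ ω in {ω | |X 0 ω| ≤ x}, (X 0 ω) ^ 2 ∂μ)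
    (hslow : ∀ c > (0 : ℝ), Tendsto (fun x => ℓ (c * x) / ℓ x) atTop (nhds 1)) :
    TendstoInMeasure μ
      (fun n ω => (⨆ i : Fin n, |X (i : ℕ) ω|) /
        Real.sqrt (∑ i ∈ Finset.range n, (X i ω) ^ 2))
      atTop (fun _ => (0 : ℝ)) := by
  obtain rfl : ℓ = truncatedSecondMoment μ (X 0) := funext hℓ
  have hident' : ∀ i, IdentDistrib (X i) (X 0) μ μ := fun i =>
    ⟨(hmeas i).aemeasurable, (hmeas 0).aemeasurable, hident i⟩
  rw [tendstoInMeasure_iff_measureReal_dist]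
  intro ε hε
  refine tendsto_order.2 ⟨fun a ha => .of_forall fun n => ha.trans_le measureReal_nonneg,
    fun r hr => ?_⟩
  filter_upwards [eventually_measureReal_le_abs_iSup_div_le hmeas hindep hident' hslow hε
    (half_pos hr)] with n hn
  simpa only [Real.dist_0_eq_abs] using hn.trans_lt (half_lt_self hr)

/-- If `X ∈ DAN` (i.e. `ℓ(x) = E[X² 1_{|X|≤x}]` is slowly varying at infinity, `X`
non-degenerate) and `EX = 0`, then `max_{1≤i≤n} |Xᵢ| / Vₙ → 0` in probability. -/
theorem max_div_Vn_tendsto_zero_of_DAN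
    {Ω : Type*} [MeasurableSpace Ω] (μ : Measure Ω) [IsProbabilityMeasure μ]
    (X : ℕ → Ω → ℝ) (hmeas : ∀ i, Measurable (X i))
    (hindep : ProbabilityTheory.iIndepFun
      (m := fun _ : ℕ => (inferInstance : MeasurableSpace ℝ)) X μ)
    (hident : ∀ i, μ.map (X i) = μ.map (X 0))
    (hnondeg : ¬ ∃ c : ℝ, ∀ᵐ ω ∂μ, X 0 ω = c)
    (hint : Integrable (X 0) μ) (hmean : ∫ ω, X 0 ω ∂μ = 0)
    (ℓ : ℝ → ℝ) (hℓ : ∀ x, ℓ x = ∫ ω in {ω | |X 0 ω| ≤ x}, (X 0 ω) ^ 2 ∂μ)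
    (hslow : ∀ c > (0 : ℝ), Tendsto (fun x => ℓ (c * x) / ℓ x) atTop (nhds 1)) :
    TendstoInMeasure μ
      (fun n ω => (⨆ i : Fin n, |X (i : ℕ) ω|) /
        Real.sqrt (∑ i ∈ Finset.range n, (X i ω) ^ 2))
      atTop (fun _ => (0 : ℝ)) :=
  max_div_Vn_tendsto_zero_of_DAN_general μ X hmeas hindep hident ℓ hℓ hslow
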